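/- Let G be a directed multigraph, k a nonnegative integer, and suppose G contains an induced copy of the (k,c)-imbalance gadget I between vertices u and v. If S is an inclusionwise minimal set of at most k arcs such that every strongly connected component of G − S is Eulerian, then S contains no arc of I. -/

import Mathlib

open scoped Classical

def IsWalk {V E : Type} (src tgt : E → V) (A : Finset E) : List E → V → V → Prop
  | [], u, v => u = v
  | e :: l, u, v => e ∈ A ∧ src e = u ∧ IsWalk src tgt A l (tgt e) v

def Reach {V E : Type} (src tgt : E → V) (A : Finset E) (u v : V) : Prop :=
  ∃ l, IsWalk src tgt A l u v

/-- Every strongly connected component of the digraph with arc set `A` is Eulerian: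
each vertex has equal in- and out-degree counting only arcs inside its component. -/
def BalancedSCC {V E : Type} (src tgt : E → V) (A : Finset E) : Prop :=
  ∀ v : V, (A.filter fun e => src e = v ∧ Reach src tgt A (tgt e) v).card =
    (A.filter fun e => tgt e = v ∧ Reach src tgt A v (src e)).card

/-- Arcs of the `(k,c)`-imbalance gadget. -/
abbrev IG (k c : ℕ) : Type := Fin (k + 1) × (Fin (k + 1 + c) ⊕ Fin (k + 1))

def igSrc (k c : ℕ) : IG k c → Fin (k + 2)
  | (i, Sum.inl _) => i.castSucc
  | (i, Sum.inr _) => i.succ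

def igTgt (k c : ℕ) : IG k c → Fin (k + 2)
  | (i, Sum.inl _) => i.succ
  | (i, Sum.inr _) => i.castSucc

section Stmt8Aux

variable {V E : Type} {src tgt : E → V}

lemma isWalk_append {A : Finset E} : ∀ {l l' : List E} {u v x : V},
    IsWalk src tgt A l u v → IsWalk src tgt A l' v x → IsWalk src tgt A (l ++ l') u x := by
  intro l
  induction l with
  | nil =>
    intro l' u v x h h'
    have huv : u = v := h
    subst huv; exact h'
  | cons e tl ih =>
    intro l' u v x h h'
    obtain ⟨he, hs, hwk⟩ := h
    exact ⟨he, hs, ih hwk h'⟩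

lemma reach_refl {A : Finset E} (u : V) : Reach src tgt A u u := ⟨[], rfl⟩

lemma reach_trans {A : Finset E} {u v x : V} (h : Reach src tgt A u v)
    (h' : Reach src tgt A v x) : Reach src tgt A u x := by
  obtain ⟨l, hl⟩ := h; obtain ⟨l', hl'⟩ := h'
  exact ⟨l ++ l', isWalk_append hl hl'⟩

lemma reach_single {A : Finset E} {e : E} {u v : V} (he : e ∈ A) (h1 : src e = u)
    (h2 : tgt e = v) : Reach src tgt A u v := ⟨[e], he, h1, h2⟩

lemma isWalk_mono {A B : Finset E} (hAB : A ⊆ B) : ∀ {l : List E} {u v : V},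
    IsWalk src tgt A l u v → IsWalk src tgt B l u v := by
  intro l
  induction l with
  | nil => intro u v h; exact h
  | cons e tl ih => intro u v h; exact ⟨hAB h.1, h.2.1, ih h.2.2⟩

lemma reach_mono {A B : Finset E} (hAB : A ⊆ B) {u v : V} (h : Reach src tgt A u v) :
    Reach src tgt B u v := h.imp fun _ hl => isWalk_mono hAB hl

lemma reach_of_arcs {A B : Finset E} (h : ∀ e ∈ B, Reach src tgt A (src e) (tgt e)) :
    ∀ {l : List E} {u v : V}, IsWalk src tgt B l u v → Reach src tgt A u v := by
  intro l
  induction l with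
  | nil => intro u v hl; have huv : u = v := hl; subst huv; exact reach_refl u
  | cons e tl ih =>
    intro u v hl
    obtain ⟨he, hs, hwk⟩ := hl
    exact reach_trans (hs ▸ h e he) (ih hwk)

end Stmt8Aux

noncomputable def fwc {E : Type} (k c : ℕ) (ι : IG k c → E) (S : Finset E) (j : Fin (k+1)) : ℕ :=
  (Finset.univ.filter fun a : Fin (k+1+c) => ι (j, Sum.inl a) ∉ S).card

noncomputable def bwc {E : Type} (k c : ℕ) (ι : IG k c → E) (S : Finset E) (j : Fin (k+1)) : ℕ :=
  (Finset.univ.filter fun b : Fin (k+1) => ι (j, Sum.inr b) ∉ S).card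

lemma seg_split {E : Type} (k c : ℕ) (ι : IG k c → E)
    (S : Finset E) (i : Fin (k+2)) (j₁ j₂ : Fin (k+1))
    (h1 : j₁.val = i.val) (h2 : j₂.val + 1 = i.val) :
    (Finset.univ.filter fun g : IG k c => igSrc k c g = i ∧ ι g ∉ S).card
      = fwc k c ι S j₁ + bwc k c ι S j₂ := by
  have hset : (Finset.univ.filter fun g : IG k c => igSrc k c g = i ∧ ι g ∉ S)
      = ((Finset.univ.filter fun a : Fin (k+1+c) => ι (j₁, Sum.inl a) ∉ S).image
          fun a => ((j₁, Sum.inl a) : IG k c))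
        ∪ ((Finset.univ.filter fun b : Fin (k+1) => ι (j₂, Sum.inr b) ∉ S).image
          fun b => ((j₂, Sum.inr b) : IG k c)) := by
    ext ⟨p, x⟩
    rw [Finset.mem_filter]
    cases x with
    | inl a =>
      simp only [Finset.mem_filter, Finset.mem_univ, true_and, Finset.mem_union,
        Finset.mem_image, Prod.mk.injEq, Sum.inl.injEq, igSrc, and_false, exists_false,
        or_false, reduceCtorEq, false_and, exists_const]
      constructor
      · rintro ⟨hcs, hS⟩
        have hp : p = j₁ := by
          apply Fin.ext
          have := congrArg Fin.val hcs
          simp [Fin.castSucc] at this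
          omega
        subst hp
        exact ⟨a, hS, rfl, rfl⟩
      · rintro ⟨a', hS, hj, ha⟩
        subst hj; subst ha
        refine ⟨?_, hS⟩
        apply Fin.ext
        simpa [Fin.castSucc] using h1
    | inr b =>
      simp only [Finset.mem_filter, Finset.mem_univ, true_and, Finset.mem_union,
        Finset.mem_image, Prod.mk.injEq, Sum.inr.injEq, igSrc, and_false, exists_false,
        false_or, reduceCtorEq, false_and, exists_const]
      constructor
      · rintro ⟨hcs, hS⟩
        have hp : p = j₂ := by
          apply Fin.ext
          have := congrArg Fin.val hcs
          simp [Fin.succ] at this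
          omega
        subst hp
        exact ⟨b, hS, rfl, rfl⟩
      · rintro ⟨b', hS, hj, hb⟩
        subst hj; subst hb
        refine ⟨?_, hS⟩
        apply Fin.ext
        simpa [Fin.succ] using h2
  rw [hset, Finset.card_union_of_disjoint, Finset.card_image_of_injective,
    Finset.card_image_of_injective]
  · rfl
  · intro x y hxy; simpa using hxy
  · intro x y hxy; simpa using hxy
  · rw [Finset.disjoint_left]
    rintro ⟨p, x⟩ hx hy
    simp only [Finset.mem_image, Finset.mem_filter] at hx hy
    obtain ⟨a, -, ha⟩ := hx
    obtain ⟨b, -, hb⟩ := hy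
    rw [← hb] at ha
    simp at ha

lemma seg_split_tgt {E : Type} (k c : ℕ) (ι : IG k c → E)
    (S : Finset E) (i : Fin (k+2)) (j₁ j₂ : Fin (k+1))
    (h1 : j₁.val = i.val) (h2 : j₂.val + 1 = i.val) :
    (Finset.univ.filter fun g : IG k c => igTgt k c g = i ∧ ι g ∉ S).card
      = fwc k c ι S j₂ + bwc k c ι S j₁ := by
  have hset : (Finset.univ.filter fun g : IG k c => igTgt k c g = i ∧ ι g ∉ S)
      = ((Finset.univ.filter fun a : Fin (k+1+c) => ι (j₂, Sum.inl a) ∉ S).image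
          fun a => ((j₂, Sum.inl a) : IG k c))
        ∪ ((Finset.univ.filter fun b : Fin (k+1) => ι (j₁, Sum.inr b) ∉ S).image
          fun b => ((j₁, Sum.inr b) : IG k c)) := by
    ext ⟨p, x⟩
    rw [Finset.mem_filter]
    cases x with
    | inl a =>
      simp only [Finset.mem_filter, Finset.mem_univ, true_and, Finset.mem_union,
        Finset.mem_image, Prod.mk.injEq, Sum.inl.injEq, igTgt, and_false, exists_false,
        or_false, reduceCtorEq, false_and, exists_const]
      constructor
      · rintro ⟨hcs, hS⟩
        have hp : p = j₂ := by
          apply Fin.ext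
          have := congrArg Fin.val hcs
          simp [Fin.succ] at this
          omega
        subst hp
        exact ⟨a, hS, rfl, rfl⟩
      · rintro ⟨a', hS, hj, ha⟩
        subst hj; subst ha
        refine ⟨?_, hS⟩
        apply Fin.ext
        simpa [Fin.succ] using h2
    | inr b =>
      simp only [Finset.mem_filter, Finset.mem_univ, true_and, Finset.mem_union,
        Finset.mem_image, Prod.mk.injEq, Sum.inr.injEq, igTgt, and_false, exists_false,
        false_or, reduceCtorEq, false_and, exists_const]
      constructor
      · rintro ⟨hcs, hS⟩
        have hp : p = j₁ := by
          apply Fin.ext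
          have := congrArg Fin.val hcs
          simp [Fin.castSucc] at this
          omega
        subst hp
        exact ⟨b, hS, rfl, rfl⟩
      · rintro ⟨b', hS, hj, hb⟩
        subst hj; subst hb
        refine ⟨?_, hS⟩
        apply Fin.ext
        simpa [Fin.castSucc] using h1
  rw [hset, Finset.card_union_of_disjoint, Finset.card_image_of_injective,
    Finset.card_image_of_injective]
  · rfl
  · intro x y hxy; simpa using hxy
  · intro x y hxy; simpa using hxy
  · rw [Finset.disjoint_left]
    rintro ⟨p, x⟩ hx hy
    simp only [Finset.mem_image, Finset.mem_filter] at hx hy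
    obtain ⟨a, -, ha⟩ := hx
    obtain ⟨b, -, hb⟩ := hy
    rw [← hb] at ha
    simp at ha

/-- If `G` contains an induced copy of the `(k,c)`-imbalance gadget (vertex map `w`,
arc map `ι`), then an inclusionwise minimal solution `S` of size at most `k` to ESCAD
contains no arc of the gadget. -/
theorem stmt8 {V E : Type} (src tgt : E → V) (A : Finset E) (k c : ℕ) (hc : 0 < c)
    (w : Fin (k + 2) → V) (hw : Function.Injective w)
    (ι : IG k c → E) (hι : Function.Injective ι)
    (hmem : ∀ g, ι g ∈ A)
    (hsrc : ∀ g, src (ι g) = w (igSrc k c g))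
    (htgt : ∀ g, tgt (ι g) = w (igTgt k c g))
    (hind₁ : ∀ e ∈ A, e ∉ Set.range ι →
      ∀ j : Fin (k + 2), (src e = w j ∨ tgt e = w j) → j = 0 ∨ j = Fin.last (k + 1))
    (hind₂ : ∀ e ∈ A, (∃ j, src e = w j) → (∃ j, tgt e = w j) → e ∈ Set.range ι)
    (S : Finset E) (hSsub : S ⊆ A) (hScard : S.card ≤ k)
    (hsol : BalancedSCC src tgt (A \ S))
    (hmin : ∀ S' ⊂ S, ¬ BalancedSCC src tgt (A \ S')) :
    ∀ g, ι g ∉ S := by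
  classical
  -- surviving arcs in each segment
  have survF : ∀ j : Fin (k+1), ∃ a : Fin (k+1+c), ι (j, Sum.inl a) ∉ S := by
    intro j
    by_contra h
    push_neg at h
    have hinj : Function.Injective
        (fun a : Fin (k+1+c) => (⟨ι (j, Sum.inl a), h a⟩ : {x // x ∈ S})) := by
      intro a b hab
      have := hι (Subtype.mk_eq_mk.mp hab)
      simpa using this
    have := Fintype.card_le_of_injective _ hinj
    simp [Fintype.card_coe] at this
    omega
  have survB : ∀ j : Fin (k+1), ∃ b : Fin (k+1), ι (j, Sum.inr b) ∉ S := by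
    intro j
    by_contra h
    push_neg at h
    have hinj : Function.Injective
        (fun b : Fin (k+1) => (⟨ι (j, Sum.inr b), h b⟩ : {x // x ∈ S})) := by
      intro a b hab
      have := hι (Subtype.mk_eq_mk.mp hab)
      simpa using this
    have := Fintype.card_le_of_injective _ hinj
    simp [Fintype.card_coe] at this
    omega
  have reachF : ∀ j : Fin (k+1), Reach src tgt (A \ S) (w j.castSucc) (w j.succ) := by
    intro j
    obtain ⟨a, ha⟩ := survF j
    exact reach_single (Finset.mem_sdiff.mpr ⟨hmem _, ha⟩)
      (hsrc (j, Sum.inl a)) (htgt (j, Sum.inl a))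
  have reachB : ∀ j : Fin (k+1), Reach src tgt (A \ S) (w j.succ) (w j.castSucc) := by
    intro j
    obtain ⟨b, hb⟩ := survB j
    exact reach_single (Finset.mem_sdiff.mpr ⟨hmem _, hb⟩)
      (hsrc (j, Sum.inr b)) (htgt (j, Sum.inr b))
  -- degree equations at the internal vertices
  have hdeg : ∀ (t : ℕ) (ht : t < k),
      fwc k c ι S ⟨t+1, by omega⟩ + bwc k c ι S ⟨t, by omega⟩
        = fwc k c ι S ⟨t, by omega⟩ + bwc k c ι S ⟨t+1, by omega⟩ := by
    intro t ht
    have hik : t + 1 < k + 2 := by omega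
    set i : Fin (k+2) := ⟨t+1, hik⟩ with hidef
    have h1 : ((A \ S).filter fun e => src e = w i ∧ Reach src tgt (A \ S) (tgt e) (w i))
        = (Finset.univ.filter fun g : IG k c => igSrc k c g = i ∧ ι g ∉ S).image ι := by
      ext e
      simp only [Finset.mem_filter, Finset.mem_sdiff, Finset.mem_image, Finset.mem_univ,
        true_and]
      constructor
      · rintro ⟨⟨heA, heS⟩, hse, -⟩
        have hrange : e ∈ Set.range ι := by
          by_contra hr
          rcases hind₁ e heA hr i (Or.inl hse) with h | h
          · have h0 := congrArg Fin.val h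
            simp [hidef] at h0
          · have h0 := congrArg Fin.val h
            simp [hidef, Fin.last] at h0
            omega
        obtain ⟨g, rfl⟩ := hrange
        refine ⟨g, ⟨?_, heS⟩, rfl⟩
        apply hw
        rw [← hsrc g, hse]
      · rintro ⟨g, ⟨hgs, hgS⟩, rfl⟩
        refine ⟨⟨hmem g, hgS⟩, by rw [hsrc g, hgs], ?_⟩
        rw [htgt g]
        obtain ⟨p, x⟩ := g
        cases x with
        | inl a =>
          have hp : p.castSucc = i := hgs
          exact hp ▸ reachB p
        | inr b =>
          have hp : p.succ = i := hgs
          exact hp ▸ reachF p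
    have h2 : ((A \ S).filter fun e => tgt e = w i ∧ Reach src tgt (A \ S) (w i) (src e))
        = (Finset.univ.filter fun g : IG k c => igTgt k c g = i ∧ ι g ∉ S).image ι := by
      ext e
      simp only [Finset.mem_filter, Finset.mem_sdiff, Finset.mem_image, Finset.mem_univ,
        true_and]
      constructor
      · rintro ⟨⟨heA, heS⟩, hte, -⟩
        have hrange : e ∈ Set.range ι := by
          by_contra hr
          rcases hind₁ e heA hr i (Or.inr hte) with h | h
          · have h0 := congrArg Fin.val h
            simp [hidef] at h0
          · have h0 := congrArg Fin.val h
            simp [hidef, Fin.last] at h0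
            omega
        obtain ⟨g, rfl⟩ := hrange
        refine ⟨g, ⟨?_, heS⟩, rfl⟩
        apply hw
        rw [← htgt g, hte]
      · rintro ⟨g, ⟨hgs, hgS⟩, rfl⟩
        refine ⟨⟨hmem g, hgS⟩, by rw [htgt g, hgs], ?_⟩
        rw [hsrc g]
        obtain ⟨p, x⟩ := g
        cases x with
        | inl a =>
          have hp : p.succ = i := hgs
          exact hp ▸ reachB p
        | inr b =>
          have hp : p.castSucc = i := hgs
          exact hp ▸ reachF p
    have hb := hsol (w i)
    rw [h1, h2, Finset.card_image_of_injective _ hι, Finset.card_image_of_injective _ hι,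
      seg_split k c ι S i ⟨t+1, by omega⟩ ⟨t, by omega⟩ rfl rfl,
      seg_split_tgt k c ι S i ⟨t+1, by omega⟩ ⟨t, by omega⟩ rfl rfl] at hb
    exact hb
  -- move to ℕ-indexed counters to have omega-friendly statements
  set FW : ℕ → ℕ := fun t => if h : t < k + 1 then fwc k c ι S ⟨t, h⟩ else 0 with hFWdef
  set BW : ℕ → ℕ := fun t => if h : t < k + 1 then bwc k c ι S ⟨t, h⟩ else 0 with hBWdef
  have hFWj : ∀ j : Fin (k+1), FW j.val = fwc k c ι S j := by
    intro j; simp only [hFWdef, dif_pos j.isLt]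
  have hBWj : ∀ j : Fin (k+1), BW j.val = bwc k c ι S j := by
    intro j; simp only [hBWdef, dif_pos j.isLt]
  have hdeg' : ∀ t : ℕ, t < k → FW (t+1) + BW t = FW t + BW (t+1) := by
    intro t ht
    have h1 : t + 1 < k + 1 := by omega
    have h2 : t < k + 1 := by omega
    simp only [hFWdef, hBWdef, dif_pos h1, dif_pos h2]
    exact hdeg t ht
  have hinv : ∀ t : ℕ, t ≤ k → FW t + BW 0 = FW 0 + BW t := by
    intro t
    induction t with
    | zero => intro _; rfl
    | succ n ih =>
      intro hn
      have h1 := hdeg' n (by omega)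
      have h2 := ih (by omega)
      omega
  have hpair : ∀ s t : Fin (k+1),
      fwc k c ι S s + bwc k c ι S t = fwc k c ι S t + bwc k c ι S s := by
    intro s t
    have hs := hinv s.val (by omega)
    have ht := hinv t.val (by omega)
    rw [hFWj s, hBWj s] at hs
    rw [hFWj t, hBWj t] at ht
    omega
  -- pigeonhole: some untouched segment
  have huntouched : ∃ j₀ : Fin (k+1), ∀ x, ι (j₀, x) ∉ S := by
    by_contra h
    push_neg at h
    choose f hf using h
    have hinj : Function.Injective
        (fun j : Fin (k+1) => (⟨ι (j, f j), hf j⟩ : {e // e ∈ S})) := by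
      intro a b hab
      have := hι (Subtype.mk_eq_mk.mp hab)
      exact congrArg Prod.fst this
    have := Fintype.card_le_of_injective _ hinj
    simp [Fintype.card_coe] at this
    omega
  obtain ⟨j₀, hj₀⟩ := huntouched
  have hf0 : fwc k c ι S j₀ = k + 1 + c := by
    unfold fwc
    rw [Finset.filter_true_of_mem fun a _ => hj₀ (Sum.inl a)]
    simp
  have hb0 : bwc k c ι S j₀ = k + 1 := by
    unfold bwc
    rw [Finset.filter_true_of_mem fun b _ => hj₀ (Sum.inr b)]
    simp
  have key : ∀ j : Fin (k+1), fwc k c ι S j + (k+1) = bwc k c ι S j + (k+1+c) := by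
    intro j
    have := hpair j j₀
    rw [hf0, hb0] at this
    omega
  have hfle : ∀ j : Fin (k+1), fwc k c ι S j ≤ k+1+c := by
    intro j
    refine le_trans (Finset.card_filter_le _ _) ?_
    simp
  have hble : ∀ j : Fin (k+1), bwc k c ι S j ≤ k+1 := by
    intro j
    refine le_trans (Finset.card_filter_le _ _) ?_
    simp
  -- a segment cannot contain both a deleted forward and a deleted backward arc
  have hcontra : ∀ j : Fin (k+1), (∃ a, ι (j, Sum.inl a) ∈ S) →
      (∃ b, ι (j, Sum.inr b) ∈ S) → False := by
    rintro j ⟨a₀, ha₀⟩ ⟨b₀, hb₀⟩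
    set e₁ : E := ι (j, Sum.inl a₀) with he₁def
    set e₂ : E := ι (j, Sum.inr b₀) with he₂def
    have hne12 : e₁ ≠ e₂ := by
      intro h
      have := hι h
      simp at this
    set S' : Finset E := S \ {e₁, e₂} with hS'def
    have hS'sub : S' ⊆ S := Finset.sdiff_subset
    have hss : S' ⊂ S := by
      refine Finset.sdiff_ssubset ?_ ⟨e₁, by simp⟩
      intro x hx
      simp only [Finset.mem_insert, Finset.mem_singleton] at hx
      rcases hx with rfl | rfl
      · exact ha₀
      · exact hb₀
    have hA' : A \ S' = insert e₁ (insert e₂ (A \ S)) := by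
      ext e
      constructor
      · intro he
        obtain ⟨heA, heS'⟩ := Finset.mem_sdiff.mp he
        rw [Finset.mem_insert, Finset.mem_insert]
        by_cases h1 : e = e₁
        · exact Or.inl h1
        by_cases h2 : e = e₂
        · exact Or.inr (Or.inl h2)
        refine Or.inr (Or.inr (Finset.mem_sdiff.mpr ⟨heA, fun hS => heS' ?_⟩))
        rw [hS'def, Finset.mem_sdiff]
        exact ⟨hS, by simp [h1, h2]⟩
      · intro he
        rw [Finset.mem_insert, Finset.mem_insert] at he
        rw [Finset.mem_sdiff]
        rcases he with rfl | rfl | he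
        · exact ⟨hmem _, fun h => (Finset.mem_sdiff.mp h).2 (by simp)⟩
        · exact ⟨hmem _, fun h => (Finset.mem_sdiff.mp h).2 (by simp)⟩
        · obtain ⟨heA, heS⟩ := Finset.mem_sdiff.mp he
          exact ⟨heA, fun h => heS (Finset.mem_sdiff.mp h).1⟩
    have hDsub : A \ S ⊆ A \ S' := Finset.sdiff_subset_sdiff (le_refl A) hS'sub
    have hRe : ∀ u' v' : V, Reach src tgt (A \ S') u' v' ↔ Reach src tgt (A \ S) u' v' := by
      intro u' v'
      constructor
      · rintro ⟨l, hl⟩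
        refine reach_of_arcs ?_ hl
        intro e he
        rw [hA'] at he
        rcases Finset.mem_insert.mp he with rfl | he
        · rw [hsrc, htgt]
          exact reachF j
        rcases Finset.mem_insert.mp he with rfl | he
        · rw [hsrc, htgt]
          exact reachB j
        · exact reach_single he rfl rfl
      · exact reach_mono hDsub
    have he₁D : e₁ ∉ A \ S := fun h => (Finset.mem_sdiff.mp h).2 ha₀
    have he₂D : e₂ ∉ A \ S := fun h => (Finset.mem_sdiff.mp h).2 hb₀
    have hcs : w (Fin.castSucc j) ≠ w (Fin.succ j) := by
      intro h
      have := congrArg Fin.val (hw h)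
      simp [Fin.castSucc, Fin.succ] at this
    have hbal : BalancedSCC src tgt (A \ S') := by
      intro v
      have hfL : ((A \ S').filter fun e => src e = v ∧ Reach src tgt (A \ S') (tgt e) v)
          = ((A \ S').filter fun e => src e = v ∧ Reach src tgt (A \ S) (tgt e) v) := by
        apply Finset.filter_congr
        intro e _
        simp only [hRe]
      have hfR : ((A \ S').filter fun e => tgt e = v ∧ Reach src tgt (A \ S') v (src e))
          = ((A \ S').filter fun e => tgt e = v ∧ Reach src tgt (A \ S) v (src e)) := by
        apply Finset.filter_congr
        intro e _
        simp only [hRe]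
      rw [hfL, hfR, hA']
      set P : E → Prop := fun e => src e = v ∧ Reach src tgt (A \ S) (tgt e) v with hPdef
      set Q : E → Prop := fun e => tgt e = v ∧ Reach src tgt (A \ S) v (src e) with hQdef
      have hP1 : P e₁ ↔ v = w (Fin.castSucc j) := by
        constructor
        · rintro ⟨h1, -⟩
          rw [← h1, hsrc]; rfl
        · rintro rfl
          exact ⟨by rw [hsrc]; rfl, by rw [htgt]; exact reachB j⟩
      have hP2 : P e₂ ↔ v = w (Fin.succ j) := by
        constructor
        · rintro ⟨h1, -⟩
          rw [← h1, hsrc]; rfl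
        · rintro rfl
          exact ⟨by rw [hsrc]; rfl, by rw [htgt]; exact reachF j⟩
      have hQ1 : Q e₁ ↔ v = w (Fin.succ j) := by
        constructor
        · rintro ⟨h1, -⟩
          rw [← h1, htgt]; rfl
        · rintro rfl
          exact ⟨by rw [htgt]; rfl, by rw [hsrc]; exact reachB j⟩
      have hQ2 : Q e₂ ↔ v = w (Fin.castSucc j) := by
        constructor
        · rintro ⟨h1, -⟩
          rw [← h1, htgt]; rfl
        · rintro rfl
          exact ⟨by rw [htgt]; rfl, by rw [hsrc]; exact reachF j⟩
      have hbase := hsol v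
      by_cases hv1 : v = w (Fin.castSucc j)
      · have hv2 : v ≠ w (Fin.succ j) := by rw [hv1]; exact hcs
        have hLset : ((insert e₁ (insert e₂ (A \ S))).filter P)
            = insert e₁ ((A \ S).filter P) := by
          rw [Finset.filter_insert, if_pos (hP1.mpr hv1), Finset.filter_insert,
            if_neg (fun h => hv2 (hP2.mp h))]
        have hRset : ((insert e₁ (insert e₂ (A \ S))).filter Q)
            = insert e₂ ((A \ S).filter Q) := by
          rw [Finset.filter_insert, if_neg (fun h => hv2 (hQ1.mp h)), Finset.filter_insert,
            if_pos (hQ2.mpr hv1)]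
        rw [hLset, hRset,
          Finset.card_insert_of_notMem (fun h => he₁D (Finset.mem_filter.mp h).1),
          Finset.card_insert_of_notMem (fun h => he₂D (Finset.mem_filter.mp h).1)]
        rw [hbase]
      by_cases hv2 : v = w (Fin.succ j)
      · have hLset : ((insert e₁ (insert e₂ (A \ S))).filter P)
            = insert e₂ ((A \ S).filter P) := by
          rw [Finset.filter_insert, if_neg (fun h => hv1 (hP1.mp h)), Finset.filter_insert,
            if_pos (hP2.mpr hv2)]
        have hRset : ((insert e₁ (insert e₂ (A \ S))).filter Q)
            = insert e₁ ((A \ S).filter Q) := by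
          rw [Finset.filter_insert, if_pos (hQ1.mpr hv2), Finset.filter_insert,
            if_neg (fun h => hv1 (hQ2.mp h))]
        rw [hLset, hRset,
          Finset.card_insert_of_notMem (fun h => he₂D (Finset.mem_filter.mp h).1),
          Finset.card_insert_of_notMem (fun h => he₁D (Finset.mem_filter.mp h).1)]
        rw [hbase]
      · have hLset : ((insert e₁ (insert e₂ (A \ S))).filter P) = (A \ S).filter P := by
          rw [Finset.filter_insert, if_neg (fun h => hv1 (hP1.mp h)), Finset.filter_insert,
            if_neg (fun h => hv2 (hP2.mp h))]
        have hRset : ((insert e₁ (insert e₂ (A \ S))).filter Q) = (A \ S).filter Q := by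
          rw [Finset.filter_insert, if_neg (fun h => hv2 (hQ1.mp h)), Finset.filter_insert,
            if_neg (fun h => hv1 (hQ2.mp h))]
        rw [hLset, hRset, hbase]
    exact hmin S' hss hbal
  -- wrap up
  rintro ⟨j, x⟩ hgS
  have hfull_f : (∀ a, ι (j, Sum.inl a) ∉ S) → fwc k c ι S j = k+1+c := by
    intro h
    unfold fwc
    rw [Finset.filter_true_of_mem fun a _ => h a]
    simp
  have hfull_b : (∀ b, ι (j, Sum.inr b) ∉ S) → bwc k c ι S j = k+1 := by
    intro h
    unfold bwc
    rw [Finset.filter_true_of_mem fun b _ => h b]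
    simp
  have hfw_all : fwc k c ι S j = k+1+c → ∀ a, ι (j, Sum.inl a) ∉ S := by
    intro h a
    have huniv : (Finset.univ.filter fun a : Fin (k+1+c) => ι (j, Sum.inl a) ∉ S)
        = Finset.univ := by
      apply Finset.eq_univ_of_card
      simpa [fwc] using h
    simpa using Finset.eq_univ_iff_forall.mp huniv a
  have hbw_all : bwc k c ι S j = k+1 → ∀ b, ι (j, Sum.inr b) ∉ S := by
    intro h b
    have huniv : (Finset.univ.filter fun b : Fin (k+1) => ι (j, Sum.inr b) ∉ S)
        = Finset.univ := by
      apply Finset.eq_univ_of_card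
      simpa [bwc] using h
    simpa using Finset.eq_univ_iff_forall.mp huniv b
  cases x with
  | inl a =>
    have hne : fwc k c ι S j ≠ k+1+c := fun h => hfw_all h a hgS
    have hblt : bwc k c ι S j ≠ k+1 := by
      have := key j
      have := hfle j
      intro hEq
      apply hne
      omega
    have : ¬ ∀ b, ι (j, Sum.inr b) ∉ S := fun h => hblt (hfull_b h)
    push_neg at this
    obtain ⟨b, hb⟩ := this
    exact hcontra j ⟨a, hgS⟩ ⟨b, hb⟩
  | inr b =>
    have hne : bwc k c ι S j ≠ k+1 := fun h => hbw_all h b hgS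
    have hflt : fwc k c ι S j ≠ k+1+c := by
      have := key j
      have := hble j
      intro hEq
      apply hne
      omega
    have : ¬ ∀ a, ι (j, Sum.inl a) ∉ S := fun h => hflt (hfull_f h)
    push_neg at this
    obtain ⟨a, ha⟩ := this
    exact hcontra j ⟨a, ha⟩ ⟨b, hgS⟩
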